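/- Let f be a discrete Morse-Bott function on a finite abstract simplicial complex K and let C be a collection for f. Then no cell σ ∈ C is simultaneously upward noncritical and downward noncritical with respect to C. -/

import Mathlib

open Finset

noncomputable section
open scoped Classical

/-- `σ` is a facet of `τ`: `σ ⊆ τ` and `dim σ = dim τ − 1`. -/
def Facet (σ τ : Finset ℕ) : Prop := σ ⊆ τ ∧ σ.card + 1 = τ.card

/-- A finite abstract simplicial complex: a finite family of nonempty finite sets
closed under taking nonempty subsets. -/
def IsComplex (K : Finset (Finset ℕ)) : Prop :=
  (∀ σ ∈ K, σ.Nonempty) ∧ ∀ σ ∈ K, ∀ ν, ν ⊆ σ → ν.Nonempty → ν ∈ K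

/-- The closure of a set of cells: all nonempty subsets of its cells. -/
def closureOf (S : Finset (Finset ℕ)) : Finset (Finset ℕ) :=
  S.biUnion fun σ => σ.powerset.filter fun ν => ν ≠ ∅

/-- The graph on `C` joining two cells whenever their closures intersect is connected. -/
def ConnectedOn (C : Finset (Finset ℕ)) : Prop :=
  ∀ a ∈ C, ∀ b ∈ C,
    Relation.ReflTransGen
      (fun x y => x ∈ C ∧ y ∈ C ∧ (closureOf {x} ∩ closureOf {y}).Nonempty) a b

/-- A nonempty set of cells of `K`, all with the same `f`-value, whose
closure-intersection graph is connected. -/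
def IsPreCollection (K : Finset (Finset ℕ)) (f : Finset ℕ → ℝ) (C : Finset (Finset ℕ)) :
    Prop :=
  C ⊆ K ∧ C.Nonempty ∧ (∀ σ ∈ C, ∀ τ ∈ C, f σ = f τ) ∧ ConnectedOn C

/-- A collection for `f`: a maximal constant-value connected set of cells. -/
def IsCollection (K : Finset (Finset ℕ)) (f : Finset ℕ → ℝ) (C : Finset (Finset ℕ)) :
    Prop :=
  IsPreCollection K f C ∧ ∀ C', IsPreCollection K f C' → C ⊆ C' → C' = C

/-- `#{τ ∉ C : σ < τ, f(τ) < f(σ)}`. -/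
def UpCount (K : Finset (Finset ℕ)) (f : Finset ℕ → ℝ) (C : Finset (Finset ℕ))
    (σ : Finset ℕ) : ℕ :=
  (K.filter fun τ => τ ∉ C ∧ Facet σ τ ∧ f τ < f σ).card

/-- `#{ν ∉ C : ν < σ, f(ν) > f(σ)}`. -/
def DownCount (K : Finset (Finset ℕ)) (f : Finset ℕ → ℝ) (C : Finset (Finset ℕ))
    (σ : Finset ℕ) : ℕ :=
  (K.filter fun ν => ν ∉ C ∧ Facet ν σ ∧ f σ < f ν).card

/-- A discrete Morse-Bott function on `K`. -/
def IsMorseBott (K : Finset (Finset ℕ)) (f : Finset ℕ → ℝ) : Prop :=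
  ∀ C, IsCollection K f C → ∀ σ ∈ C, UpCount K f C σ ≤ 1 ∧ DownCount K f C σ ≤ 1

/-- `σ` is upward noncritical w.r.t. `C`. -/
def UpNoncrit (K : Finset (Finset ℕ)) (f : Finset ℕ → ℝ) (C : Finset (Finset ℕ))
    (σ : Finset ℕ) : Prop :=
  ∃ w ∈ K, w ∉ C ∧ Facet σ w ∧ f w < f σ

/-- `σ` is downward noncritical w.r.t. `C`. -/
def DownNoncrit (K : Finset (Finset ℕ)) (f : Finset ℕ → ℝ) (C : Finset (Finset ℕ))
    (σ : Finset ℕ) : Prop :=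
  ∃ w ∈ K, w ∉ C ∧ Facet w σ ∧ f σ < f w

/-- The reduced collection `C^red`: the cells of `C` that are neither upward nor
downward noncritical w.r.t. `C`. -/
def reducedOf (K : Finset (Finset ℕ)) (f : Finset ℕ → ℝ) (C : Finset (Finset ℕ)) :
    Finset (Finset ℕ) :=
  C.filter fun σ => ¬ UpNoncrit K f C σ ∧ ¬ DownNoncrit K f C σ

/-- A noncritical pair: a two-element set `{σ, τ}` with `σ < τ` and `f σ ≥ f τ`. -/
def IsNoncritPair (f : Finset ℕ → ℝ) (S : Finset (Finset ℕ)) : Prop :=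
  ∃ σ τ, Facet σ τ ∧ f τ ≤ f σ ∧ S = {σ, τ}

/-- A discrete Morse function in Forman's sense. -/
def IsDiscreteMorse (K : Finset (Finset ℕ)) (g : Finset ℕ → ℝ) : Prop :=
  ∀ σ ∈ K, (K.filter fun τ => Facet σ τ ∧ g τ ≤ g σ).card ≤ 1 ∧
    (K.filter fun ν => Facet ν σ ∧ g σ ≤ g ν).card ≤ 1

/-- A critical cell of `g`. -/
def IsCritical (K : Finset (Finset ℕ)) (g : Finset ℕ → ℝ) (σ : Finset ℕ) : Prop :=
  σ ∈ K ∧ (K.filter fun τ => Facet σ τ ∧ g τ ≤ g σ).card = 0 ∧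
    (K.filter fun ν => Facet ν σ ∧ g σ ≤ g ν).card = 0

/-! Let `v < σ < w` with `f w < f σ < f v`. The interval `[v, w]` of a simplicial complex is a
diamond, so it contains a second cell `σ' ≠ σ` with `v < σ' < w`. If `f σ' < f v`, then `v` has
the two cofaces `σ`, `σ'` of smaller value; otherwise `f σ' ≥ f v > f σ > f w`, and `w` has the
two faces `σ`, `σ'` of larger value. Either way the Morse-Bott condition fails at the collection
of `v` or of `w`. -/

lemma IsComplex.exists_ne_facet_between {K : Finset (Finset ℕ)} (hK : IsComplex K)
    {v σ w : Finset ℕ} (hw : w ∈ K) (hvσ : Facet v σ) (hσw : Facet σ w) :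
    ∃ σ' ∈ K, σ' ≠ σ ∧ Facet v σ' ∧ Facet σ' w := by
  obtain ⟨hvσ, hcard_v⟩ := hvσ
  obtain ⟨hσw, hcard_σ⟩ := hσw
  obtain ⟨b, hb⟩ : (w \ σ).Nonempty := by
    rw [← Finset.card_pos, Finset.card_sdiff_of_subset hσw]
    omega
  obtain ⟨hbw, hbσ⟩ := Finset.mem_sdiff.mp hb
  have hbv : b ∉ v := fun h => hbσ (hvσ h)
  have hsub : insert b v ⊆ w := Finset.insert_subset hbw (hvσ.trans hσw)
  have hcard : (insert b v).card = v.card + 1 := Finset.card_insert_of_notMem hbv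
  refine ⟨insert b v, hK.2 w hw _ hsub (Finset.insert_nonempty b v),
    fun h => hbσ (h ▸ Finset.mem_insert_self b v), ⟨Finset.subset_insert b v, ?_⟩, ⟨hsub, ?_⟩⟩
  all_goals omega

lemma IsPreCollection.singleton {K : Finset (Finset ℕ)} {x : Finset ℕ} (f : Finset ℕ → ℝ)
    (hx : x ∈ K) : IsPreCollection K f {x} := by
  refine ⟨Finset.singleton_subset_iff.mpr hx, Finset.singleton_nonempty x, ?_, ?_⟩
  · intro a ha b hb
    rw [Finset.mem_singleton.mp ha, Finset.mem_singleton.mp hb]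
  · intro a ha b hb
    rw [Finset.mem_singleton.mp ha, Finset.mem_singleton.mp hb]

/-- A precollection of maximal cardinality among those containing `x` is a collection. -/
lemma exists_isCollection_mem {K : Finset (Finset ℕ)} (f : Finset ℕ → ℝ) {x : Finset ℕ}
    (hx : x ∈ K) : ∃ C, IsCollection K f C ∧ x ∈ C := by
  set S := K.powerset.filter fun C => IsPreCollection K f C ∧ x ∈ C
  have hxS : {x} ∈ S :=
    Finset.mem_filter.mpr ⟨Finset.mem_powerset.mpr (Finset.singleton_subset_iff.mpr hx),
      IsPreCollection.singleton f hx, Finset.mem_singleton_self x⟩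
  obtain ⟨C, hCS, hCmax⟩ := S.exists_max_image Finset.card ⟨_, hxS⟩
  obtain ⟨-, hC, hxC⟩ := Finset.mem_filter.mp hCS
  refine ⟨C, ⟨hC, fun C' hC' hCC' => ?_⟩, hxC⟩
  have hC'S : C' ∈ S := Finset.mem_filter.mpr ⟨Finset.mem_powerset.mpr hC'.1, hC', hCC' hxC⟩
  exact (Finset.eq_of_subset_of_card_le hCC' (hCmax C' hC'S)).symm

lemma IsCollection.notMem_of_ne {K C : Finset (Finset ℕ)} {f : Finset ℕ → ℝ}
    (hC : IsCollection K f C) {x y : Finset ℕ} (hx : x ∈ C) (hxy : f y ≠ f x) : y ∉ C :=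
  fun hy => hxy (hC.1.2.2.1 y hy x hx)

lemma IsMorseBott.coface_unique {K : Finset (Finset ℕ)} {f : Finset ℕ → ℝ}
    (hf : IsMorseBott K f) {v τ₁ τ₂ : Finset ℕ} (hv : v ∈ K) (hτ₁ : τ₁ ∈ K) (hτ₂ : τ₂ ∈ K)
    (hvτ₁ : Facet v τ₁) (hvτ₂ : Facet v τ₂) (hf₁ : f τ₁ < f v) (hf₂ : f τ₂ < f v) :
    τ₁ = τ₂ := by
  obtain ⟨C, hC, hvC⟩ := exists_isCollection_mem f hv
  by_contra hne
  have hcount : 1 < UpCount K f C v := Finset.one_lt_card.mpr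
    ⟨τ₁, Finset.mem_filter.mpr ⟨hτ₁, hC.notMem_of_ne hvC hf₁.ne, hvτ₁, hf₁⟩,
      τ₂, Finset.mem_filter.mpr ⟨hτ₂, hC.notMem_of_ne hvC hf₂.ne, hvτ₂, hf₂⟩, hne⟩
  exact hcount.not_ge (hf C hC v hvC).1

lemma IsMorseBott.face_unique {K : Finset (Finset ℕ)} {f : Finset ℕ → ℝ}
    (hf : IsMorseBott K f) {w ν₁ ν₂ : Finset ℕ} (hw : w ∈ K) (hν₁ : ν₁ ∈ K) (hν₂ : ν₂ ∈ K)
    (hν₁w : Facet ν₁ w) (hν₂w : Facet ν₂ w) (hf₁ : f w < f ν₁) (hf₂ : f w < f ν₂) :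
    ν₁ = ν₂ := by
  obtain ⟨C, hC, hwC⟩ := exists_isCollection_mem f hw
  by_contra hne
  have hcount : 1 < DownCount K f C w := Finset.one_lt_card.mpr
    ⟨ν₁, Finset.mem_filter.mpr ⟨hν₁, hC.notMem_of_ne hwC hf₁.ne', hν₁w, hf₁⟩,
      ν₂, Finset.mem_filter.mpr ⟨hν₂, hC.notMem_of_ne hwC hf₂.ne', hν₂w, hf₂⟩, hne⟩
  exact hcount.not_ge (hf C hC w hwC).2

/-- No cell of a collection `C` is simultaneously upward and downward
noncritical with respect to `C`. -/
theorem statement1 (K : Finset (Finset ℕ)) (hK : IsComplex K) (f : Finset ℕ → ℝ)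
    (hf : IsMorseBott K f) (C : Finset (Finset ℕ)) (hC : IsCollection K f C)
    (σ : Finset ℕ) (hσ : σ ∈ C) :
    ¬ (UpNoncrit K f C σ ∧ DownNoncrit K f C σ) := by
  rintro ⟨⟨w, hwK, -, hσw, hfw⟩, ⟨v, hvK, -, hvσ, hfv⟩⟩
  have hσK : σ ∈ K := hC.1.1 hσ
  obtain ⟨σ', hσ'K, hne, hvσ', hσ'w⟩ := hK.exists_ne_facet_between hwK hvσ hσw
  rcases lt_or_ge (f σ') (f v) with hlt | hge
  · exact hne (hf.coface_unique hvK hσ'K hσK hvσ' hvσ hlt hfv)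
  · exact hne (hf.face_unique hwK hσ'K hσK hσ'w hσw (by linarith) hfw)
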